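/- Let G ⊆ GL(d,ℂ) be a finite group generated by pseudoreflections and let Ω ⊆ ℂ^d be a bounded G-invariant domain (a nonempty, open, connected set with σ(Ω) = Ω for every σ ∈ G). Let θ = (θ_1,…,θ_d) : ℂ^d → ℂ^d be a basic polynomial map for G, i.e. θ_1,…,θ_d are homogeneous, algebraically independent polynomials with ℂ[z_1,…,z_d]^G = ℂ[θ_1,…,θ_d]. Then θ(Ω) is a domain in ℂ^d (nonempty, open and connected), and θ : Ω → θ(Ω) is a proper map, i.e. the preimage under θ of every compact subset of θ(Ω) is a compact subset of Ω. -/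

import Mathlib

open Matrix

noncomputable section

/-- The linear action of an invertible matrix on `ℂ^d`. -/
def act {d : ℕ} (σ : GL (Fin d) ℂ) (z : Fin d → ℂ) : Fin d → ℂ :=
  Matrix.mulVec (σ : Matrix (Fin d) (Fin d) ℂ) z

/-- A pseudoreflection: an element of `GL(d, ℂ)` of finite order whose fixed point
space is a hyperplane, i.e. `rank (1 - σ) = 1`. -/
def IsPseudoreflection {d : ℕ} (σ : GL (Fin d) ℂ) : Prop :=
  IsOfFinOrder σ ∧ Matrix.rank ((1 : Matrix (Fin d) (Fin d) ℂ) - (σ : Matrix (Fin d) (Fin d) ℂ)) = 1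

/-- `G` is generated by the pseudoreflections it contains. -/
def IsPseudoreflectionGroup {d : ℕ} (G : Subgroup (GL (Fin d) ℂ)) : Prop :=
  Subgroup.closure {σ : GL (Fin d) ℂ | σ ∈ G ∧ IsPseudoreflection σ} = G

/-- The action of `σ ∈ GL(d, ℂ)` on polynomials: `(σ · f)(z) = f(σ⁻¹ z)`. -/
def polyAct {d : ℕ} (σ : GL (Fin d) ℂ) :
    MvPolynomial (Fin d) ℂ →ₐ[ℂ] MvPolynomial (Fin d) ℂ :=
  MvPolynomial.aeval (fun i =>
    ∑ j, MvPolynomial.C (((σ⁻¹ : GL (Fin d) ℂ) : Matrix (Fin d) (Fin d) ℂ) i j) *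
      MvPolynomial.X j)

namespace S17
open MvPolynomial

variable {d : ℕ}

lemma act_mul (σ τ : GL (Fin d) ℂ) (z) : act (σ * τ) z = act σ (act τ z) := by
  simp [act, Matrix.mulVec_mulVec]

lemma act_one (z : Fin d → ℂ) : act (1 : GL (Fin d) ℂ) z = z := by
  simp [act]

lemma eval_polyAct (σ : GL (Fin d) ℂ) (f : MvPolynomial (Fin d) ℂ) (z : Fin d → ℂ) :
    eval z (polyAct σ f) = eval (act σ⁻¹ z) f := by
  show eval z (bind₁ _ f) = _
  simp only [eval, eval₂Hom_bind₁]
  have h : (fun i => (eval₂Hom (RingHom.id ℂ) z) (∑ j, C ((( σ⁻¹ : GL (Fin d) ℂ) : Matrix (Fin d) (Fin d) ℂ) i j) * X j)) = act σ⁻¹ z := by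
    funext i
    simp [act, Matrix.mulVec, dotProduct]
  rw [h]

lemma polyAct_comp (σ τ : GL (Fin d) ℂ) (f : MvPolynomial (Fin d) ℂ) :
    polyAct σ (polyAct τ f) = polyAct (σ * τ) f := by
  have h : (polyAct σ).comp (polyAct τ) = polyAct (σ * τ) := by
    apply MvPolynomial.algHom_ext
    intro i
    have hm : ((((σ * τ)⁻¹ : GL (Fin d) ℂ)) : Matrix (Fin d) (Fin d) ℂ)
        = ((τ⁻¹ : GL (Fin d) ℂ) : Matrix (Fin d) (Fin d) ℂ)
          * ((σ⁻¹ : GL (Fin d) ℂ) : Matrix (Fin d) (Fin d) ℂ) := by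
      rw [_root_.mul_inv_rev]; rfl
    simp only [AlgHom.comp_apply, polyAct, aeval_X, map_sum, _root_.map_mul, aeval_C, hm, MvPolynomial.algebraMap_eq,
      Matrix.mul_apply, Finset.mul_sum, Finset.sum_mul, C_mul, mul_assoc]
    rw [Finset.sum_comm]
  calc polyAct σ (polyAct τ f) = ((polyAct σ).comp (polyAct τ)) f := rfl
    _ = polyAct (σ * τ) f := by rw [h]

lemma polyAct_one (f : MvPolynomial (Fin d) ℂ) : polyAct (1 : GL (Fin d) ℂ) f = f := by
  have h : polyAct (1 : GL (Fin d) ℂ) = AlgHom.id ℂ _ := by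
    apply MvPolynomial.algHom_ext
    intro i
    simp [polyAct, Matrix.one_apply, apply_ite MvPolynomial.C, ite_mul]
  rw [h]; rfl


/-- A polynomial which is `1` at `b` and `0` on a finite set not containing `b`. -/
lemma exists_one_at_zero_on (s : Finset (Fin d → ℂ)) (b : Fin d → ℂ) (hb : b ∉ s) :
    ∃ q : MvPolynomial (Fin d) ℂ, eval b q = 1 ∧ ∀ a ∈ s, eval a q = 0 := by
  classical
  have hfac : ∀ a : Fin d → ℂ, ∃ q : MvPolynomial (Fin d) ℂ,
      eval b q = 1 ∧ (a ≠ b → eval a q = 0) := by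
    intro a
    by_cases hab : a = b
    · exact ⟨1, by simp, fun h => absurd hab h⟩
    obtain ⟨i, hi⟩ := Function.ne_iff.mp hab
    refine ⟨C (b i - a i)⁻¹ * (X i - C (a i)), ?_, fun _ => ?_⟩
    · simp only [_root_.map_mul, eval_C, map_sub, eval_X]
      rw [inv_mul_cancel₀ (sub_ne_zero.mpr (fun h => hi h.symm))]
    · simp
  choose q hq1 hq0 using hfac
  refine ⟨∏ a ∈ s, q a, ?_, ?_⟩
  · rw [map_prod]
    exact Finset.prod_eq_one fun a _ => hq1 _
  · intro a ha
    rw [map_prod]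
    exact Finset.prod_eq_zero ha (hq0 a (fun h => hb (h ▸ ha)))

/-- A polynomial which is `0` on `s` and `1` on `t`, for disjoint finite sets. -/
lemma exists_separating (s t : Finset (Fin d → ℂ)) (hst : Disjoint s t) :
    ∃ q : MvPolynomial (Fin d) ℂ, (∀ a ∈ s, eval a q = 0) ∧ ∀ b ∈ t, eval b q = 1 := by
  classical
  have h : ∀ b : Fin d → ℂ, ∃ q : MvPolynomial (Fin d) ℂ,
      eval b q = 1 ∧ ∀ a ∈ (s ∪ t).erase b, eval a q = 0 :=
    fun b => exists_one_at_zero_on _ _ (Finset.notMem_erase _ _)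
  choose q hq1 hq0 using h
  refine ⟨∑ b ∈ t, q b, ?_, ?_⟩
  · intro a ha
    rw [map_sum]
    refine Finset.sum_eq_zero fun b hbt => hq0 b a ?_
    exact Finset.mem_erase.mpr ⟨fun h => (Finset.disjoint_left.mp hst ha) (h ▸ hbt),
      Finset.mem_union_left _ ha⟩
  · intro b hb
    rw [map_sum, Finset.sum_eq_single_of_mem b hb
      (fun c hc hcb => hq0 c b (Finset.mem_erase.mpr
        ⟨fun h => hcb h.symm, Finset.mem_union_right _ hb⟩))]
    exact hq1 b

lemma eval_aeval' (z : Fin d → ℂ) (g : Fin d → MvPolynomial (Fin d) ℂ)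
    (P : MvPolynomial (Fin d) ℂ) :
    eval z (aeval g P) = eval (fun i => eval z (g i)) P := by
  show eval z (bind₁ g P) = _
  simp only [eval, eval₂Hom_bind₁]

variable {G : Subgroup (GL (Fin d) ℂ)} [Fintype G]

lemma fiber_orbit (θ : Fin d → MvPolynomial (Fin d) ℂ)
    (hθgen : ∀ p : MvPolynomial (Fin d) ℂ,
      (∀ σ : G, polyAct (σ : GL (Fin d) ℂ) p = p) → p ∈ Algebra.adjoin ℂ (Set.range θ))
    (z w : Fin d → ℂ) (h : ∀ i, eval z (θ i) = eval w (θ i)) :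
    ∃ σ : G, w = act (σ : GL (Fin d) ℂ) z := by
  classical
  by_contra h'
  push_neg at h'
  set O1 : Finset (Fin d → ℂ) := Finset.image (fun σ : G => act (σ : GL (Fin d) ℂ) z) Finset.univ with hO1
  set O2 : Finset (Fin d → ℂ) := Finset.image (fun σ : G => act (σ : GL (Fin d) ℂ) w) Finset.univ with hO2
  have hdisj : Disjoint O1 O2 := by
    rw [Finset.disjoint_left]
    rintro x hx1 hx2
    obtain ⟨σ, _, hσ⟩ := Finset.mem_image.mp hx1
    obtain ⟨τ, _, hτ⟩ := Finset.mem_image.mp hx2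
    apply h' (τ⁻¹ * σ)
    have : act ((τ : GL (Fin d) ℂ))⁻¹ (act (τ : GL (Fin d) ℂ) w)
        = act ((τ : GL (Fin d) ℂ))⁻¹ (act (σ : GL (Fin d) ℂ) z) := by rw [hσ, hτ]
    rw [← act_mul, ← act_mul, inv_mul_cancel, act_one] at this
    rw [this]
    rfl
  obtain ⟨q, hq0, hq1⟩ := exists_separating O1 O2 hdisj
  set p : MvPolynomial (Fin d) ℂ := ∑ σ : G, polyAct (σ : GL (Fin d) ℂ) q with hp
  have hinv : ∀ τ : G, polyAct (τ : GL (Fin d) ℂ) p = p := by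
    intro τ
    rw [hp, map_sum]
    refine Fintype.sum_equiv (Equiv.mulLeft τ) _ _ fun σ => ?_
    rw [polyAct_comp]
    rfl
  obtain ⟨P, hP⟩ : ∃ P, aeval θ P = p := by
    have := hθgen p hinv
    rwa [Algebra.adjoin_range_eq_range_aeval, AlgHom.mem_range] at this
  have hz : eval z p = 0 := by
    rw [hp, map_sum]
    refine Finset.sum_eq_zero fun σ _ => ?_
    rw [eval_polyAct]
    refine hq0 _ ?_
    exact Finset.mem_image.mpr ⟨σ⁻¹, Finset.mem_univ _, rfl⟩
  have hw : eval w p = (Fintype.card G : ℂ) := by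
    rw [hp, map_sum]
    have h1 : ∀ σ : G, eval w (polyAct (σ : GL (Fin d) ℂ) q) = 1 := by
      intro σ
      rw [eval_polyAct]
      exact hq1 _ (Finset.mem_image.mpr ⟨σ⁻¹, Finset.mem_univ _, rfl⟩)
    rw [Finset.sum_congr rfl fun (σ : G) _ => h1 σ]
    simp [Finset.card_univ]
  have hzw : eval z p = eval w p := by
    rw [← hP, eval_aeval', eval_aeval']
    have : (fun i => eval z (θ i)) = fun i => eval w (θ i) := funext h
    rw [this]
  rw [hz, hw] at hzw
  exact absurd hzw.symm (Nat.cast_ne_zero.mpr Fintype.card_ne_zero)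

lemma eval_smul_of_isHomogeneous {p : MvPolynomial (Fin d) ℂ} {n : ℕ}
    (hp : p.IsHomogeneous n) (c : ℂ) (z : Fin d → ℂ) :
    eval (c • z) p = c ^ n * eval z p := by
  rw [eval_eq', eval_eq', Finset.mul_sum]
  refine Finset.sum_congr rfl fun m hm => ?_
  have hdeg : ∑ i, m i = n := by
    have h1 := hp (MvPolynomial.mem_support_iff.mp hm)
    have h2 : Finsupp.degree m = Finsupp.weight 1 m := by
      rw [Finsupp.degree_eq_weight_one]; rfl
    rw [← h2] at h1
    rw [← h1, Finsupp.degree]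
    exact (Finset.sum_subset (Finset.subset_univ _)
      (fun i _ hi => Finsupp.notMem_support_iff.mp hi)).symm
  calc MvPolynomial.coeff m p * ∏ i, (c • z) i ^ m i
      = MvPolynomial.coeff m p * ∏ i, (c ^ m i * z i ^ m i) := by
        simp only [Pi.smul_apply, smul_eq_mul, mul_pow]
    _ = c ^ n * (MvPolynomial.coeff m p * ∏ i, z i ^ m i) := by
        rw [Finset.prod_mul_distrib, Finset.prod_pow_eq_pow_sum, hdeg]; ring

lemma exists_pos_degrees (θ : Fin d → MvPolynomial (Fin d) ℂ)
    (hθhom : ∀ i, ∃ n, (θ i).IsHomogeneous n) (hθalg : AlgebraicIndependent ℂ θ) :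
    ∃ n : Fin d → ℕ, (∀ i, (θ i).IsHomogeneous (n i)) ∧ ∀ i, 1 ≤ n i := by
  choose n hn using hθhom
  refine ⟨n, hn, fun i => ?_⟩
  by_contra hcon
  have h0 : n i = 0 := Nat.lt_one_iff.mp (not_le.mp hcon)
  have htr := hθalg.transcendental i
  have hne : θ i ≠ 0 := fun h => htr (h ▸ isAlgebraic_zero)
  have htd : (θ i).totalDegree = 0 := by
    have := (hn i).totalDegree hne
    rw [h0] at this; exact this
  have hC : θ i = C (MvPolynomial.coeff 0 (θ i)) := by
    apply MvPolynomial.ext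
    intro m
    by_cases hm0 : m = 0
    · subst hm0; rw [MvPolynomial.coeff_C]; simp
    · rw [MvPolynomial.coeff_C, if_neg (fun h => hm0 h.symm)]
      by_contra hne0
      exact hm0 ((MvPolynomial.totalDegree_eq_zero_iff (Fin d) (θ i)).mp htd m
        (MvPolynomial.mem_support_iff.mpr hne0) |> fun hh => Finsupp.ext hh)
  exact htr (hC ▸ isAlgebraic_algebraMap (MvPolynomial.coeff 0 (θ i)))

lemma theta_proper (θ : Fin d → MvPolynomial (Fin d) ℂ) (n : Fin d → ℕ)
    (hn : ∀ i, (θ i).IsHomogeneous (n i)) (hn1 : ∀ i, 1 ≤ n i)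
    (hzero : ∀ z : Fin d → ℂ, (∀ i, eval z (θ i) = 0) → z = 0) :
    ∀ K : Set (Fin d → ℂ), IsCompact K →
      IsCompact ((fun z i => eval z (θ i)) ⁻¹' K) := by
  set Θ : (Fin d → ℂ) → (Fin d → ℂ) := fun z i => eval z (θ i) with hΘ
  have hcont : Continuous Θ := continuous_pi fun i => MvPolynomial.continuous_eval (p := θ i)
  rcases Nat.eq_zero_or_pos d with hd | hd
  · subst hd
    intro K _
    exact (Set.toFinite _).isCompact
  · haveI : Nonempty (Fin d) := ⟨⟨0, hd⟩⟩
    haveI : Nontrivial (Fin d → ℂ) := Function.nontrivial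
    obtain ⟨u₀, hu₀, hmin⟩ := (isCompact_sphere (0 : Fin d → ℂ) 1).exists_isMinOn
      (NormedSpace.sphere_nonempty.mpr zero_le_one) (hcont.norm.continuousOn)
    set m : ℝ := ‖Θ u₀‖ with hm
    have hmpos : 0 < m := by
      rw [hm, norm_pos_iff]
      intro h0
      have : u₀ = 0 := hzero u₀ (fun i => congrFun h0 i)
      rw [mem_sphere_iff_norm, this, sub_zero, norm_zero] at hu₀
      exact one_ne_zero hu₀.symm
    have hgrow : ∀ z : Fin d → ℂ, 1 ≤ ‖z‖ → m * ‖z‖ ≤ ‖Θ z‖ := by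
      intro z hz
      have hr0 : (0 : ℝ) < ‖z‖ := lt_of_lt_of_le one_pos hz
      set c : ℂ := (‖z‖ : ℂ) with hc
      have hcne : c ≠ 0 := by
        simp only [hc, ne_eq, Complex.ofReal_eq_zero]
        exact ne_of_gt hr0
      set u : Fin d → ℂ := c⁻¹ • z with hu
      have hzu : z = c • u := (smul_inv_smul₀ hcne z).symm
      have hunorm : ‖u‖ = 1 := by
        rw [hu, norm_smul, norm_inv]
        have : ‖c‖ = ‖z‖ := by rw [hc, Complex.norm_real, Real.norm_of_nonneg hr0.le]
        rw [this, inv_mul_cancel₀ (ne_of_gt hr0)]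
      have husphere : u ∈ Metric.sphere (0 : Fin d → ℂ) 1 := by
        rw [mem_sphere_iff_norm, sub_zero]; exact hunorm
      have hmu : m ≤ ‖Θ u‖ := hmin husphere
      obtain ⟨i, hi⟩ : ∃ i, m ≤ ‖Θ u i‖ := by
        by_contra hcon
        push_neg at hcon
        have := (pi_norm_lt_iff hmpos).mpr hcon
        exact absurd hmu (not_le.mpr this)
      have heval : Θ z i = c ^ (n i) * Θ u i := by
        simp only [hΘ]
        rw [hzu]
        exact eval_smul_of_isHomogeneous (hn i) c u
      have hcnorm : ‖c‖ = ‖z‖ := by rw [hc, Complex.norm_real, Real.norm_of_nonneg hr0.le]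
      calc m * ‖z‖ ≤ ‖Θ u i‖ * ‖z‖ ^ (n i) := by
            refine mul_le_mul hi ?_ (by positivity) (norm_nonneg _)
            calc ‖z‖ = ‖z‖ ^ 1 := (pow_one _).symm
              _ ≤ ‖z‖ ^ (n i) := pow_le_pow_right₀ hz (hn1 i)
        _ = ‖Θ z i‖ := by
            rw [heval, norm_mul, norm_pow, hcnorm, mul_comm]
        _ ≤ ‖Θ z‖ := norm_le_pi_norm (Θ z) i
    intro K hK
    refine Metric.isCompact_of_isClosed_isBounded (hK.isClosed.preimage hcont) ?_
    obtain ⟨C, hC⟩ := (isBounded_iff_forall_norm_le).mp hK.isBounded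
    rw [isBounded_iff_forall_norm_le]
    refine ⟨max 1 (C / m), fun z hzK => ?_⟩
    by_cases h1 : ‖z‖ ≤ 1
    · exact le_trans h1 (le_max_left _ _)
    · push_neg at h1
      have h2 := hgrow z h1.le
      have h3 : ‖Θ z‖ ≤ C := hC _ hzK
      have : ‖z‖ ≤ C / m := by
        rw [le_div_iff₀ hmpos]
        linarith [h2, h3]
      exact le_trans this (le_max_right _ _)

lemma theta_surjective (θ : Fin d → MvPolynomial (Fin d) ℂ)
    (hθalg : AlgebraicIndependent ℂ θ)
    (hθgen : ∀ p : MvPolynomial (Fin d) ℂ,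
      (∀ σ : G, polyAct (σ : GL (Fin d) ℂ) p = p) → p ∈ Algebra.adjoin ℂ (Set.range θ))
    (w : Fin d → ℂ) : ∃ z : Fin d → ℂ, ∀ i, eval z (θ i) = w i := by
  classical
  set S : Subalgebra ℂ (MvPolynomial (Fin d) ℂ) := (aeval θ).range with hS
  have hmem : ∀ p : MvPolynomial (Fin d) ℂ,
      (∀ σ : G, polyAct (σ : GL (Fin d) ℂ) p = p) → p ∈ S := by
    intro p hp
    rw [hS, ← Algebra.adjoin_range_eq_range_aeval]
    exact hθgen p hp
  -- `A` is integral over `S`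
  have hint : ∀ i : Fin d, IsIntegral S (X i : MvPolynomial (Fin d) ℂ) := by
    intro i
    set F : Polynomial (MvPolynomial (Fin d) ℂ) :=
      ∏ σ : G, (Polynomial.X - Polynomial.C (polyAct (σ : GL (Fin d) ℂ) (X i))) with hF
    have hmonic : F.Monic :=
      Polynomial.monic_prod_of_monic _ _ (fun σ _ => Polynomial.monic_X_sub_C _)
    have heval : Polynomial.eval (X i : MvPolynomial (Fin d) ℂ) F = 0 := by
      rw [hF, Polynomial.eval_prod]
      apply Finset.prod_eq_zero (Finset.mem_univ (1 : G))
      have h1 : polyAct ((1 : G) : GL (Fin d) ℂ) (X i : MvPolynomial (Fin d) ℂ) = X i := by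
        rw [Subgroup.coe_one, polyAct_one]
      rw [Polynomial.eval_sub, Polynomial.eval_X, Polynomial.eval_C, h1, sub_self]
    have hcoeff : ∀ k, F.coeff k ∈ S := by
      intro k
      apply hmem
      intro τ
      have hmap : Polynomial.map (polyAct (τ : GL (Fin d) ℂ)).toRingHom F = F := by
        rw [hF, Polynomial.map_prod]
        have hfac : ∀ σ : G, Polynomial.map (polyAct (τ : GL (Fin d) ℂ)).toRingHom
            (Polynomial.X - Polynomial.C (polyAct (σ : GL (Fin d) ℂ) (X i)))
            = Polynomial.X - Polynomial.C (polyAct ((τ * σ : G) : GL (Fin d) ℂ) (X i)) := by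
          intro σ
          rw [Polynomial.map_sub, Polynomial.map_X, Polynomial.map_C]
          have h2 : (polyAct (τ : GL (Fin d) ℂ)).toRingHom (polyAct (σ : GL (Fin d) ℂ) (X i))
              = polyAct (((τ * σ : G) : GL (Fin d) ℂ)) (X i) := by
            show polyAct (τ : GL (Fin d) ℂ) (polyAct (σ : GL (Fin d) ℂ) (X i)) = _
            rw [polyAct_comp]; rfl
          rw [h2]
        rw [Finset.prod_congr rfl (fun σ _ => hfac σ)]
        exact Fintype.prod_equiv (Equiv.mulLeft τ) _ _ (fun σ => rfl)
      calc polyAct (τ : GL (Fin d) ℂ) (F.coeff k)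
          = (Polynomial.map (polyAct (τ : GL (Fin d) ℂ)).toRingHom F).coeff k :=
            (Polynomial.coeff_map _ _).symm
        _ = F.coeff k := by rw [hmap]
    have hlifts : F ∈ Polynomial.lifts (algebraMap S (MvPolynomial (Fin d) ℂ)) := by
      rw [Polynomial.lifts_iff_coeff_lifts]
      intro k
      exact ⟨⟨F.coeff k, hcoeff k⟩, rfl⟩
    obtain ⟨F₀, hF₀map, _, hF₀monic⟩ :=
      Polynomial.lifts_and_degree_eq_and_monic hlifts hmonic
    refine ⟨F₀, hF₀monic, ?_⟩
    rw [Polynomial.eval₂_eq_eval_map, hF₀map]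
    exact heval
  haveI hAint : Algebra.IsIntegral S (MvPolynomial (Fin d) ℂ) := by
    constructor
    intro x
    have htop : Subalgebra.restrictScalars ℂ (integralClosure S (MvPolynomial (Fin d) ℂ)) = ⊤ := by
      rw [eq_top_iff, ← MvPolynomial.adjoin_range_X]
      apply Algebra.adjoin_le
      rintro y ⟨i, rfl⟩
      exact hint i
    have hx : x ∈ Subalgebra.restrictScalars ℂ (integralClosure S (MvPolynomial (Fin d) ℂ)) := by
      rw [htop]; trivial
    exact hx
  -- the evaluation homomorphism on `S` corresponding to `w`
  have hinj : Function.Injective (aeval θ : MvPolynomial (Fin d) ℂ →ₐ[ℂ] MvPolynomial (Fin d) ℂ) :=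
    algebraicIndependent_iff_injective_aeval.mp hθalg
  set e : MvPolynomial (Fin d) ℂ ≃ₐ[ℂ] S := AlgEquiv.ofInjective _ hinj with he
  set ψ : S →ₐ[ℂ] ℂ := (aeval w).comp e.symm.toAlgHom with hψ
  have hψsurj : Function.Surjective ψ.toRingHom := by
    intro c
    exact ⟨algebraMap ℂ S c, by simp⟩
  haveI h𝔪max : (RingHom.ker ψ.toRingHom).IsMaximal :=
    RingHom.ker_isMaximal_of_surjective _ hψsurj
  have hkerle : RingHom.ker (algebraMap S (MvPolynomial (Fin d) ℂ)) ≤ RingHom.ker ψ.toRingHom := by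
    have hinj2 : Function.Injective (algebraMap S (MvPolynomial (Fin d) ℂ)) := Subtype.coe_injective
    rw [(RingHom.injective_iff_ker_eq_bot _).mp hinj2]
    exact bot_le
  obtain ⟨P, hPmax, hPcomap⟩ :=
    Ideal.exists_ideal_over_maximal_of_isIntegral (RingHom.ker ψ.toRingHom) hkerle
  obtain ⟨z, hz⟩ := MvPolynomial.isMaximal_iff_eq_vanishingIdeal_singleton.mp hPmax
  refine ⟨z, fun i => ?_⟩
  have hψX : ψ (e (X i)) = w i := by
    rw [hψ, AlgHom.comp_apply, AlgEquiv.coe_algHom, AlgEquiv.symm_apply_apply, aeval_X]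
  have helt : e (X i) - algebraMap ℂ S (w i) ∈ RingHom.ker ψ.toRingHom := by
    rw [RingHom.mem_ker]
    show ψ (e (X i) - algebraMap ℂ S (w i)) = 0
    rw [map_sub, hψX, AlgHom.commutes]
    simp
  have hP : θ i - C (w i) ∈ P := by
    rw [← hPcomap] at helt
    have := Ideal.mem_comap.mp helt
    have hcoe : algebraMap S (MvPolynomial (Fin d) ℂ) (e (X i) - algebraMap ℂ S (w i)) = θ i - C (w i) := by
      have h1 : algebraMap S (MvPolynomial (Fin d) ℂ) (e (X i)) = θ i := by
        show ((e (X i) : S) : MvPolynomial (Fin d) ℂ) = θ i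
        rw [he, AlgEquiv.ofInjective_apply, aeval_X]
      have h2 : algebraMap S (MvPolynomial (Fin d) ℂ) (algebraMap ℂ S (w i)) = C (w i) := by
        rw [← IsScalarTower.algebraMap_apply ℂ S (MvPolynomial (Fin d) ℂ) (w i),
          MvPolynomial.algebraMap_eq]
      rw [RingHom.map_sub, h1, h2]
    rwa [hcoe] at this
  have := (MvPolynomial.mem_vanishingIdeal_singleton_iff z (θ i - C (w i))).mp (hz ▸ hP)
  rw [map_sub, aeval_C, sub_eq_zero] at this
  exact this

end S17

/-- The data of the reflection arrangement of a finite pseudoreflection group `G`: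
the distinct reflecting hyperplanes `H_i = {ℓ_i = 0}` (`ℓ_i` nonzero homogeneous linear
forms), together with generators `a_i` of the cyclic subgroups of `G` fixing `H_i`
pointwise, of orders `m_i`. -/
structure ReflectionArrangement (d : ℕ) (G : Subgroup (GL (Fin d) ℂ)) where
  t : ℕ
  ℓ : Fin t → MvPolynomial (Fin d) ℂ
  a : Fin t → G
  m : Fin t → ℕ
  ℓ_ne_zero : ∀ i, ℓ i ≠ 0
  ℓ_homog : ∀ i, (ℓ i).IsHomogeneous 1
  hyperplanes_distinct : ∀ i j, i ≠ j →
    {z : Fin d → ℂ | MvPolynomial.eval z (ℓ i) = 0} ≠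
      {z : Fin d → ℂ | MvPolynomial.eval z (ℓ j) = 0}
  reflecting : ∀ i, ∃ σ : G, IsPseudoreflection (σ : GL (Fin d) ℂ) ∧
    ∀ z, MvPolynomial.eval z (ℓ i) = 0 → act (σ : GL (Fin d) ℂ) z = z
  complete : ∀ σ : G, IsPseudoreflection (σ : GL (Fin d) ℂ) →
    ∃ i, ∀ z, MvPolynomial.eval z (ℓ i) = 0 → act (σ : GL (Fin d) ℂ) z = z
  cyclic_stab : ∀ i, ∀ σ : G,
    (∀ z, MvPolynomial.eval z (ℓ i) = 0 → act (σ : GL (Fin d) ℂ) z = z) ↔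
      σ ∈ Subgroup.zpowers (a i)
  order_a : ∀ i, orderOf (a i) = m i

/-- The exponents `c_i` attached to a one-dimensional representation `ρ` of `G`: the least
nonnegative integers with `ρ(a_i) = det(a_i)^{c_i}`. -/
structure RelExponents {d : ℕ} {G : Subgroup (GL (Fin d) ℂ)}
    (A : ReflectionArrangement d G) (ρ : G →* ℂˣ) where
  c : Fin A.t → ℕ
  hc : ∀ i, ((ρ (A.a i) : ℂ)) =
    (Matrix.det (((A.a i : GL (Fin d) ℂ)) : Matrix (Fin d) (Fin d) ℂ)) ^ (c i)
  hc_min : ∀ i, ∀ k : ℕ, ((ρ (A.a i) : ℂ)) =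
    (Matrix.det (((A.a i : GL (Fin d) ℂ)) : Matrix (Fin d) (Fin d) ℂ)) ^ k → c i ≤ k

/-- The generating polynomial `ℓ_ρ = ∏ i, ℓ_i ^ c_i`. -/
def ellRho {d : ℕ} {G : Subgroup (GL (Fin d) ℂ)} {A : ReflectionArrangement d G}
    {ρ : G →* ℂˣ} (E : RelExponents A ρ) : MvPolynomial (Fin d) ℂ :=
  ∏ i, (A.ℓ i) ^ (E.c i)

/-- Let `G ⊆ GL(d, ℂ)` be a finite group generated by pseudoreflections
and `Ω ⊆ ℂ^d` a bounded `G`-invariant domain.  Let `θ = (θ_1, …, θ_d)` be a basic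
polynomial map for `G`.  Then `θ(Ω)` is a domain (nonempty, open and connected), and
`θ : Ω → θ(Ω)` is proper: the preimage in `Ω` of every compact subset of `θ(Ω)` is
compact. -/
theorem stmt17 {d : ℕ} (G : Subgroup (GL (Fin d) ℂ)) [Fintype G]
    (hgen : IsPseudoreflectionGroup G)
    (Ω : Set (Fin d → ℂ)) (hΩopen : IsOpen Ω) (hΩconn : IsConnected Ω)
    (hΩbdd : Bornology.IsBounded Ω)
    (hΩG : ∀ σ : G, act (σ : GL (Fin d) ℂ) '' Ω = Ω)
    (θ : Fin d → MvPolynomial (Fin d) ℂ)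
    (hθhom : ∀ i, ∃ n, (θ i).IsHomogeneous n)
    (hθalg : AlgebraicIndependent ℂ θ)
    (hθG : ∀ i, ∀ σ : G, polyAct (σ : GL (Fin d) ℂ) (θ i) = θ i)
    (hθgen : ∀ p : MvPolynomial (Fin d) ℂ,
      (∀ σ : G, polyAct (σ : GL (Fin d) ℂ) p = p) ↔ p ∈ Algebra.adjoin ℂ (Set.range θ))
    (Θ : (Fin d → ℂ) → (Fin d → ℂ)) (hΘ : Θ = fun z i => MvPolynomial.eval z (θ i)) :
    (Θ '' Ω).Nonempty ∧ IsOpen (Θ '' Ω) ∧ IsConnected (Θ '' Ω) ∧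
    (∀ K : Set (Fin d → ℂ), K ⊆ Θ '' Ω → IsCompact K → IsCompact (Ω ∩ Θ ⁻¹' K)) := by

  subst hΘ
  set Θ : (Fin d → ℂ) → (Fin d → ℂ) := fun z i => MvPolynomial.eval z (θ i) with hΘ
  have hcont : Continuous Θ :=
    continuous_pi fun i => MvPolynomial.continuous_eval (p := θ i)
  obtain ⟨n, hn, hn1⟩ := S17.exists_pos_degrees θ hθhom hθalg
  have hgen' : ∀ p : MvPolynomial (Fin d) ℂ,
      (∀ σ : G, polyAct (σ : GL (Fin d) ℂ) p = p) → p ∈ Algebra.adjoin ℂ (Set.range θ) :=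
    fun p hp => (hθgen p).mp hp
  have hfib : ∀ z w : Fin d → ℂ, (∀ i, MvPolynomial.eval z (θ i) = MvPolynomial.eval w (θ i)) →
      ∃ σ : G, w = act (σ : GL (Fin d) ℂ) z :=
    fun z w h => S17.fiber_orbit θ hgen' z w h
  have hzero : ∀ z : Fin d → ℂ, (∀ i, MvPolynomial.eval z (θ i) = 0) → z = 0 := by
    intro z hz
    have h0 : ∀ i, MvPolynomial.eval (0 : Fin d → ℂ) (θ i) = 0 := by
      intro i
      have : (0 : Fin d → ℂ) = (0 : ℂ) • (0 : Fin d → ℂ) := by simp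
      rw [this, S17.eval_smul_of_isHomogeneous (hn i), zero_pow
        (Nat.one_le_iff_ne_zero.mp (hn1 i)), zero_mul]
    obtain ⟨σ, hσ⟩ := hfib (0 : Fin d → ℂ) z (fun i => (h0 i).trans (hz i).symm)
    rw [hσ]
    show Matrix.mulVec _ 0 = 0
    exact Matrix.mulVec_zero _
  have hproper : ∀ K : Set (Fin d → ℂ), IsCompact K → IsCompact (Θ ⁻¹' K) :=
    S17.theta_proper θ n hn hn1 hzero
  have hpropermap : IsProperMap Θ :=
    isProperMap_iff_isCompact_preimage.mpr ⟨hcont, fun K hK => hproper K hK⟩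
  have hclosedmap : IsClosedMap Θ := hpropermap.isClosedMap
  have hsurj : ∀ w : Fin d → ℂ, ∃ z : Fin d → ℂ, Θ z = w := by
    intro w
    obtain ⟨z, hz⟩ := S17.theta_surjective θ hθalg hgen' w
    exact ⟨z, funext hz⟩
  -- the image is the complement of the image of the complement
  have hsat : ∀ z w : Fin d → ℂ, z ∈ Ω → Θ w = Θ z → w ∈ Ω := by
    intro z w hz hw
    obtain ⟨σ, hσ⟩ := hfib z w (fun i => (congrFun hw i).symm)
    rw [hσ, ← hΩG σ]
    exact Set.mem_image_of_mem _ hz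
  have himage : Θ '' Ω = (Θ '' Ωᶜ)ᶜ := by
    apply Set.eq_of_subset_of_subset
    · rintro x ⟨z, hzΩ, rfl⟩ hx
      obtain ⟨y, hy, hyx⟩ := hx
      exact hy (hsat z y hzΩ hyx)
    · intro x hx
      obtain ⟨z, hz⟩ := hsurj x
      by_cases hzΩ : z ∈ Ω
      · exact ⟨z, hzΩ, hz⟩
      · exact absurd ⟨z, hzΩ, hz⟩ hx
  have hopen : IsOpen (Θ '' Ω) := by
    rw [himage]
    exact (hclosedmap _ hΩopen.isClosed_compl).isOpen_compl
  refine ⟨hΩconn.nonempty.image Θ, hopen, hΩconn.image Θ hcont.continuousOn, ?_⟩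
  intro K hKsub hK
  have hpre : Ω ∩ Θ ⁻¹' K = Θ ⁻¹' K := by
    apply Set.inter_eq_right.mpr
    intro w hw
    obtain ⟨z, hzΩ, hzw⟩ := hKsub hw
    exact hsat z w hzΩ hzw.symm  -- careful direction
  rw [hpre]
  exact hproper K hK


end
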